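/- Let α > 0 and let b₁(0) ≥ b₂(0) > 1 with α² > 8(b₁(0)−1). Set A_i = (α − √(α²−8(b_i(0)−1)))/4 for i = 1,2. Then (b₂(0)−1)/A₂ − (b₁(0)−1)/A₁ = (1/2)(√(α²−8(b₂(0)−1)) − √(α²−8(b₁(0)−1))), and there exists a constant C (depending only on α and b₁(0)) such that this quantity satisfies 0 ≤ (b₂(0)−1)/A₂ − (b₁(0)−1)/A₁ ≤ C·(b₁(0)−b₂(0)). -/
import Mathlib


theorem stmt_2 (α b₁0 b₂0 : ℝ) (hα : 0 < α) (h12 : b₁0 ≥ b₂0) (h2 : 1 < b₂0)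
    (hαb : α ^ 2 > 8 * (b₁0 - 1))
    (A₁ A₂ : ℝ)
    (hA₁ : A₁ = (α - Real.sqrt (α ^ 2 - 8 * (b₁0 - 1))) / 4)
    (hA₂ : A₂ = (α - Real.sqrt (α ^ 2 - 8 * (b₂0 - 1))) / 4) :
    (b₂0 - 1) / A₂ - (b₁0 - 1) / A₁ =
      (1 / 2) * (Real.sqrt (α ^ 2 - 8 * (b₂0 - 1)) - Real.sqrt (α ^ 2 - 8 * (b₁0 - 1))) ∧
    ∃ C : ℝ, 0 < C ∧
      0 ≤ (b₂0 - 1) / A₂ - (b₁0 - 1) / A₁ ∧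
      (b₂0 - 1) / A₂ - (b₁0 - 1) / A₁ ≤ C * (b₁0 - b₂0) := by
  set s₁ := Real.sqrt (α ^ 2 - 8 * (b₁0 - 1)) with hs₁
  set s₂ := Real.sqrt (α ^ 2 - 8 * (b₂0 - 1)) with hs₂
  have h1 : (1:ℝ) < b₁0 := lt_of_lt_of_le h2 h12
  have hp1 : (0:ℝ) < α ^ 2 - 8 * (b₁0 - 1) := by linarith
  have hp2 : (0:ℝ) < α ^ 2 - 8 * (b₂0 - 1) := by linarith
  have hs₁sq : s₁ ^ 2 = α ^ 2 - 8 * (b₁0 - 1) := Real.sq_sqrt hp1.le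
  have hs₂sq : s₂ ^ 2 = α ^ 2 - 8 * (b₂0 - 1) := Real.sq_sqrt hp2.le
  have hs₁pos : 0 < s₁ := Real.sqrt_pos.mpr hp1
  have hs₂pos : 0 < s₂ := Real.sqrt_pos.mpr hp2
  have hle : s₁ ≤ s₂ := Real.sqrt_le_sqrt (by linarith)
  have hs₁lt : s₁ < α := by nlinarith [hs₁sq]
  have hs₂lt : s₂ < α := by nlinarith [hs₂sq]
  have hA₁ne : A₁ ≠ 0 := by rw [hA₁]; exact ne_of_gt (by linarith)
  have hA₂ne : A₂ ≠ 0 := by rw [hA₂]; exact ne_of_gt (by linarith)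
  have key : (b₂0 - 1) / A₂ - (b₁0 - 1) / A₁ = (1/2) * (s₂ - s₁) := by
    have e1 : (b₁0 - 1) / A₁ = (α + s₁) / 2 := by
      rw [hA₁]
      rw [div_eq_div_iff (by linarith) (by norm_num)]
      nlinarith [hs₁sq]
    have e2 : (b₂0 - 1) / A₂ = (α + s₂) / 2 := by
      rw [hA₂]
      rw [div_eq_div_iff (by linarith) (by norm_num)]
      nlinarith [hs₂sq]
    rw [e1, e2]; ring
  refine ⟨key, 4 / s₂, by positivity, ?_, ?_⟩
  · rw [key]; linarith
  · rw [key]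
    have hnum : 0 ≤ 8 * (b₁0 - b₂0) - (s₂ - s₁) * s₂ := by nlinarith [hs₁sq, hs₂sq]
    have h4 : 4 / s₂ * (b₁0 - b₂0) - 1 / 2 * (s₂ - s₁)
        = (8 * (b₁0 - b₂0) - (s₂ - s₁) * s₂) / (2 * s₂) := by
      field_simp
      ring
    nlinarith [div_nonneg hnum (by positivity : (0:ℝ) ≤ 2 * s₂)]
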